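/- Let α, β, k > 0 and 0 < p < q with k·p < 1 and k·q > 1, and let γ := Γ((1−k·p)/(q−p)) · Γ((k·q−1)/(q−p)) / (α^k · Γ(k) · (q−p)) · (α/β)^((1−k·p)/(q−p)). If x : ℝ → ℝ satisfies, for every t ≥ 0, that x is differentiable at t with derivative x'(t) = −(α·|x(t)|^p + β·|x(t)|^q)^k · sign(x(t)), then x(t) = 0 for every t ≥ γ. (Fixed-time stability of the scalar system ẋ = −(α|x|^p + β|x|^q)^k sign(x) with settling time bounded by γ, uniformly in the initial condition.) -/

import Mathlib

/-!
While `x t ≠ 0`, the function `|x|` solves `d|x|/dt = -f |x|` with `f u = (α u^p + β u^q)^k`, so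
`t + settlingTime f |x t|` is constant, where `settlingTime f u = ∫₀ᵘ dv / f v` is the time
needed to go from `u` down to `0`. Since `settlingTime f u < ∫₀^∞ dv / f v` for `u > 0`, the
solution vanishes before that time, and once it vanishes it stays at `0` because `x²` is
nonincreasing. Substituting
`u = ((α/β) s)^(1/(q-p))` turns `∫₀^∞ dv / f v` into the beta integral
`∫₀^∞ s^(a-1) (1+s)^(-(a+b)) ds = Γ(a)Γ(b)/Γ(a+b)` with `a = (1-kp)/(q-p)`, `b = (kq-1)/(q-p)`,
which evaluates to `γ`.
-/

open Real MeasureTheory Set intervalIntegral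

theorem integral_rpow_mul_one_sub_rpow {a b : ℝ} (ha : 0 < a) (hb : 0 < b) :
    ∫ x in (0:ℝ)..1, x ^ (a - 1) * (1 - x) ^ (b - 1) = Gamma a * Gamma b / Gamma (a + b) := by
  have hB : Complex.betaIntegral a b =
      ((∫ x in (0:ℝ)..1, x ^ (a - 1) * (1 - x) ^ (b - 1) : ℝ) : ℂ) := by
    rw [Complex.betaIntegral, ← intervalIntegral.integral_ofReal]
    refine intervalIntegral.integral_congr fun x hx => ?_
    rw [uIcc_of_le zero_le_one] at hx
    push_cast [Complex.ofReal_cpow hx.1, Complex.ofReal_cpow (sub_nonneg.2 hx.2)]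
    rfl
  have key := Complex.Gamma_mul_Gamma_eq_betaIntegral (s := a) (t := b)
    (by simpa using ha) (by simpa using hb)
  rw [hB, ← Complex.ofReal_add] at key
  simp only [Complex.Gamma_ofReal] at key
  rw [eq_div_iff (Gamma_pos_of_pos (add_pos ha hb)).ne', mul_comm]
  exact_mod_cast key.symm

theorem integral_Ioi_rpow_mul_one_add_rpow {a b : ℝ} (ha : 0 < a) (hb : 0 < b) :
    ∫ t in Ioi (0:ℝ), t ^ (a - 1) * (1 + t) ^ (-(a + b)) = Gamma a * Gamma b / Gamma (a + b) := by
  have hderiv : ∀ x ∈ Ioo (0:ℝ) 1,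
      HasDerivWithinAt (fun x => x / (1 - x)) ((1 - x) ^ (-2 : ℝ)) (Ioo 0 1) x := by
    intro x hx
    have h1x : 0 < 1 - x := sub_pos.2 hx.2
    refine (((hasDerivAt_id x).div ((hasDerivAt_id x).const_sub 1) h1x.ne').congr_deriv
      ?_).hasDerivWithinAt
    rw [rpow_neg h1x.le, rpow_two]
    field_simp [h1x.ne']
    simp
  have hinj : InjOn (fun x : ℝ => x / (1 - x)) (Ioo 0 1) := by
    intro x hx y hy hxy
    rw [div_eq_div_iff (sub_pos.2 hx.2).ne' (sub_pos.2 hy.2).ne'] at hxy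
    linarith
  have himage : (fun x : ℝ => x / (1 - x)) '' Ioo 0 1 = Ioi 0 := by
    refine (image_subset_iff.2 fun x hx => div_pos hx.1 (sub_pos.2 hx.2)).antisymm
      fun t (ht : 0 < t) =>
        ⟨t / (1 + t), ⟨by positivity, (div_lt_one (by positivity)).2 (by linarith)⟩, ?_⟩
    field_simp
    ring
  rw [← himage, integral_image_eq_integral_abs_deriv_smul measurableSet_Ioo hderiv hinj,
    ← integral_rpow_mul_one_sub_rpow ha hb, intervalIntegral.integral_of_le zero_le_one,
    integral_Ioc_eq_integral_Ioo]
  refine setIntegral_congr_fun measurableSet_Ioo fun x ⟨hx0, hx1⟩ => ?_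
  have h1x : 0 < 1 - x := sub_pos.2 hx1
  have hsum : 1 + x / (1 - x) = (1 - x)⁻¹ := by field_simp; ring
  rw [smul_eq_mul, hsum, abs_of_pos (by positivity), div_rpow hx0.le h1x.le, inv_rpow h1x.le,
    ← rpow_neg h1x.le, neg_neg, div_eq_mul_inv, ← rpow_neg h1x.le]
  calc (1 - x) ^ (-2 : ℝ) * (x ^ (a - 1) * (1 - x) ^ (-(a - 1)) * (1 - x) ^ (a + b))
      = x ^ (a - 1) * ((1 - x) ^ (-2 : ℝ) * (1 - x) ^ (-(a - 1)) * (1 - x) ^ (a + b)) := by ring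
    _ = x ^ (a - 1) * (1 - x) ^ (b - 1) := by
      rw [← rpow_add h1x, ← rpow_add h1x]
      ring_nf

theorem integral_Ioi_add_rpow_rpow_neg {α β k p q : ℝ} (hα : 0 < α) (hβ : 0 < β) (hk : 0 < k)
    (hpq : p < q) (hkp : k * p < 1) (hkq : 1 < k * q) :
    ∫ u in Ioi (0:ℝ), (α * u ^ p + β * u ^ q) ^ (-k) =
      Gamma ((1 - k * p) / (q - p)) * Gamma ((k * q - 1) / (q - p)) /
        (α ^ k * Gamma k * (q - p)) * (α / β) ^ ((1 - k * p) / (q - p)) := by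
  have hqp : 0 < q - p := sub_pos.2 hpq
  have hαβ : 0 < α / β := div_pos hα hβ
  set a := (1 - k * p) / (q - p) with ha_def
  set b := (k * q - 1) / (q - p) with hb_def
  have ha : 0 < a := div_pos (by linarith) hqp
  have hb : 0 < b := div_pos (by linarith) hqp
  have hab : a + b = k := by rw [ha_def, hb_def]; field_simp; ring
  have ha_mul : a * (q - p) = 1 - k * p := by rw [ha_def]; field_simp
  obtain ⟨e, he, he_mul⟩ : ∃ e : ℝ, 0 < e ∧ e * (q - p) = 1 :=
    ⟨(q - p)⁻¹, inv_pos.2 hqp, inv_mul_cancel₀ hqp.ne'⟩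
  obtain ⟨c, hc, hc_pow⟩ : ∃ c : ℝ, 0 < c ∧ c ^ (q - p) = α / β :=
    ⟨(α / β) ^ (q - p)⁻¹, by positivity, rpow_inv_rpow hαβ.le hqp.ne'⟩
  clear_value a b
  -- the substitution `u = c * s ^ e` turns the integrand into a beta density on `Ioi 0`
  have hsubst : ∀ s ∈ Ioi (0:ℝ),
      (e * s ^ (e - 1)) • (α * (c * s ^ e) ^ p + β * (c * s ^ e) ^ q) ^ (-k)
        = e * α ^ (-k) * c ^ (-(p * k)) * (s ^ (a - 1) * (1 + s) ^ (-(a + b))) := by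
    intro s (hs : 0 < s)
    have hcq : c ^ q = c ^ p * (α / β) := by
      rw [← hc_pow, ← rpow_add hc, add_sub_cancel]
    have hsq : (s ^ e) ^ q = (s ^ e) ^ p * s := by
      rw [← rpow_mul hs.le, ← rpow_mul hs.le, ← rpow_add_one hs.ne']
      congr 1
      linear_combination he_mul
    have hfactor : α * (c * s ^ e) ^ p + β * (c * s ^ e) ^ q
        = α * c ^ p * (s ^ e) ^ p * (1 + s) := by
      rw [mul_rpow hc.le (by positivity), mul_rpow hc.le (by positivity), hcq, hsq]
      field_simp
    have hs_exp : s ^ (e - 1) * s ^ (e * -(p * k)) = s ^ (a - 1) := by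
      rw [← rpow_add hs]
      congr 1
      linear_combination a * he_mul - e * ha_mul
    rw [smul_eq_mul, hfactor, mul_rpow (by positivity) (by positivity),
      mul_rpow (by positivity) (by positivity), mul_rpow hα.le (by positivity),
      ← rpow_mul hc.le, ← rpow_mul (by positivity), ← rpow_mul hs.le, hab,
      show p * -k = -(p * k) by ring, ← hs_exp]
    ring
  have hc_mul : c * c ^ (-(p * k)) = (α / β) ^ a := by
    rw [← hc_pow, ← rpow_mul hc.le, mul_comm (q - p) a, ha_mul, sub_eq_add_neg, rpow_add hc,
      rpow_one, mul_comm k p]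
  have hscale := integral_comp_mul_left_Ioi' (fun u => (α * u ^ p + β * u ^ q) ^ (-k)) 0 hc
  rw [mul_zero, smul_eq_mul] at hscale
  calc ∫ u in Ioi (0:ℝ), (α * u ^ p + β * u ^ q) ^ (-k)
      = c * ∫ s in Ioi (0:ℝ),
          (e * s ^ (e - 1)) • (α * (c * s ^ e) ^ p + β * (c * s ^ e) ^ q) ^ (-k) := by
        rw [integral_comp_rpow_Ioi_of_pos he
          (g := fun x => (α * (c * x) ^ p + β * (c * x) ^ q) ^ (-k)), hscale]
    _ = e * α ^ (-k) * (c * c ^ (-(p * k))) * (Gamma a * Gamma b / Gamma (a + b)) := by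
        rw [setIntegral_congr_fun measurableSet_Ioi hsubst, MeasureTheory.integral_const_mul,
          integral_Ioi_rpow_mul_one_add_rpow ha hb]
        ring
    _ = Gamma a * Gamma b / (α ^ k * Gamma k * (q - p)) * (α / β) ^ a := by
        rw [hc_mul, hab, rpow_neg hα.le, eq_inv_of_mul_eq_one_left he_mul]
        field_simp

noncomputable def settlingTime (f : ℝ → ℝ) (u : ℝ) : ℝ :=
  ∫ v in (0:ℝ)..u, (f v)⁻¹

section SettlingTime

variable {f : ℝ → ℝ}

theorem settlingTime_nonneg (hf_pos : ∀ u, 0 < u → 0 < f u) {u : ℝ} (hu : 0 ≤ u) :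
    0 ≤ settlingTime f u := by
  rw [settlingTime, integral_of_le hu]
  exact setIntegral_nonneg measurableSet_Ioc fun v hv => (inv_pos.2 (hf_pos v hv.1)).le

theorem settlingTime_lt_integral_Ioi (hf_pos : ∀ u, 0 < u → 0 < f u)
    (hf_int : IntegrableOn (fun u => (f u)⁻¹) (Ioi 0)) {u : ℝ} (hu : 0 < u) :
    settlingTime f u < ∫ v in Ioi 0, (f v)⁻¹ := by
  have hinv_pos : ∀ v ∈ Ioi u, 0 < (f v)⁻¹ := fun v hv => inv_pos.2 (hf_pos v (hu.trans hv))
  have hsupp : Function.support (fun v => (f v)⁻¹) ∩ Ioi u = Ioi u :=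
    inter_eq_right.2 fun v hv => (hinv_pos v hv).ne'
  rw [settlingTime, ← integral_interval_add_Ioi hf_int (hf_int.mono_set (Ioi_subset_Ioi hu.le)),
    lt_add_iff_pos_right, setIntegral_pos_iff_support_of_nonneg_ae
      (ae_restrict_of_forall_mem measurableSet_Ioi fun v hv => (hinv_pos v hv).le)
      (hf_int.mono_set (Ioi_subset_Ioi hu.le)), hsupp, volume_Ioi]
  exact ENNReal.zero_lt_top

theorem hasDerivAt_settlingTime (hf : ContinuousOn f (Ioi 0)) (hf_pos : ∀ u, 0 < u → 0 < f u)
    (hf_int : IntegrableOn (fun u => (f u)⁻¹) (Ioi 0)) {u : ℝ} (hu : 0 < u) :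
    HasDerivAt (settlingTime f) (f u)⁻¹ u := by
  have hf_inv : ContinuousOn (fun v => (f v)⁻¹) (Ioi 0) :=
    hf.inv₀ fun v hv => (hf_pos v hv).ne'
  refine integral_hasDerivAt_right ?_ (hf_inv.stronglyMeasurableAtFilter isOpen_Ioi u hu)
    (hf_inv.continuousAt (Ioi_mem_nhds hu))
  exact (intervalIntegrable_iff_integrableOn_Ioc_of_le hu.le).2
    (hf_int.mono_set Ioc_subset_Ioi_self)

variable {x : ℝ → ℝ}

theorem hasDerivAt_abs_of_hasDerivAt_neg_mul_sign {t : ℝ}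
    (hx : HasDerivAt x (-f |x t| * Real.sign (x t)) t) (hxt : x t ≠ 0) :
    HasDerivAt (fun s => |x s|) (-f |x t|) t := by
  refine ((hasDerivAt_abs hxt).comp t hx).congr_deriv ?_
  rcases hxt.lt_or_gt with h | h <;> simp [h, Real.sign_of_neg, Real.sign_of_pos]

theorem settlingTime_abs_add_eq (hf : ContinuousOn f (Ioi 0)) (hf_pos : ∀ u, 0 < u → 0 < f u)
    (hf_int : IntegrableOn (fun u => (f u)⁻¹) (Ioi 0))
    (hx : ∀ t, 0 ≤ t → HasDerivAt x (-f |x t| * Real.sign (x t)) t) {T : ℝ}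
    (hT : 0 ≤ T) (hne : ∀ t ∈ Icc 0 T, x t ≠ 0) :
    settlingTime f |x T| + T = settlingTime f |x 0| := by
  have hderiv : ∀ t ∈ Icc 0 T, HasDerivAt (fun s => settlingTime f |x s| + s) 0 t := by
    intro t ht
    have hpos : 0 < |x t| := abs_pos.2 (hne t ht)
    refine (((hasDerivAt_settlingTime hf hf_pos hf_int hpos).comp t
      (hasDerivAt_abs_of_hasDerivAt_neg_mul_sign (hx t ht.1) (hne t ht))).add
      (hasDerivAt_id t)).congr_deriv ?_
    field_simp [(hf_pos _ hpos).ne']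
    ring
  simpa using constant_of_has_deriv_right_zero
    (fun t ht => (hderiv t ht).continuousAt.continuousWithinAt)
    (fun t ht => (hderiv t (Ico_subset_Icc_self ht)).hasDerivWithinAt) T (right_mem_Icc.2 hT)

theorem eq_zero_of_eq_zero_of_le (hf_pos : ∀ u, 0 < u → 0 < f u)
    (hx : ∀ t, 0 ≤ t → HasDerivAt x (-f |x t| * Real.sign (x t)) t) {t₀ t : ℝ}
    (ht₀ : 0 ≤ t₀) (hxt₀ : x t₀ = 0) (ht : t₀ ≤ t) : x t = 0 := by
  have hderiv : ∀ s ∈ Ici t₀,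
      HasDerivAt (fun s => x s ^ 2) (-(2 * (f |x s| * (Real.sign (x s) * x s)))) s := by
    intro s hs
    refine ((hx s (ht₀.trans hs)).fun_pow 2).congr_deriv ?_
    simp only [Nat.cast_ofNat, Nat.add_one_sub_one, pow_one]
    ring
  have hanti : AntitoneOn (fun s => x s ^ 2) (Ici t₀) := by
    refine antitoneOn_of_hasDerivWithinAt_nonpos (convex_Ici t₀)
      (fun s hs => (hderiv s hs).continuousAt.continuousWithinAt)
      (fun s hs => (hderiv s (interior_subset hs)).hasDerivWithinAt) fun s _ => ?_
    rcases eq_or_ne (x s) 0 with h | h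
    · simp [h]
    · have := mul_nonneg (hf_pos _ (abs_pos.2 h)).le (Real.sign_mul_nonneg (x s))
      linarith
  have hsq := hanti self_mem_Ici ht ht
  simp only [hxt₀] at hsq
  nlinarith [sq_nonneg (x t)]

theorem eq_zero_of_integral_Ioi_inv_le (hf : ContinuousOn f (Ioi 0))
    (hf_pos : ∀ u, 0 < u → 0 < f u) (hf_int : IntegrableOn (fun u => (f u)⁻¹) (Ioi 0))
    (hx : ∀ t, 0 ≤ t → HasDerivAt x (-f |x t| * Real.sign (x t)) t) {t : ℝ}
    (ht : ∫ u in Ioi 0, (f u)⁻¹ ≤ t) : x t = 0 := by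
  set T := ∫ u in Ioi 0, (f u)⁻¹
  have hT : 0 ≤ T := setIntegral_nonneg measurableSet_Ioi fun u hu => (inv_pos.2 (hf_pos u hu)).le
  obtain ⟨t₀, ht₀, hxt₀⟩ : ∃ t₀ ∈ Icc 0 T, x t₀ = 0 := by
    by_contra! hne
    have h_eq := settlingTime_abs_add_eq hf hf_pos hf_int hx hT hne
    have h_lt :=
      settlingTime_lt_integral_Ioi hf_pos hf_int (abs_pos.2 (hne 0 (left_mem_Icc.2 hT)))
    have h_nonneg := settlingTime_nonneg hf_pos (abs_nonneg (x T))
    linarith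
  exact eq_zero_of_eq_zero_of_le hf_pos hx ht₀.1 hxt₀ (ht₀.2.trans ht)

end SettlingTime

theorem fixed_time_scalar_general
    (α β k p q : ℝ) (hα : 0 < α) (hβ : 0 < β) (hk : 0 < k)
    (hpq : p < q) (hkp : k * p < 1) (hkq : 1 < k * q)
    (γ : ℝ)
    (hγ : γ = Real.Gamma ((1 - k * p) / (q - p)) * Real.Gamma ((k * q - 1) / (q - p)) /
        (α ^ k * Real.Gamma k * (q - p)) * (α / β) ^ ((1 - k * p) / (q - p)))
    (x : ℝ → ℝ)
    (hx : ∀ t : ℝ, 0 ≤ t →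
      HasDerivAt x (-(α * |x t| ^ p + β * |x t| ^ q) ^ k * Real.sign (x t)) t) :
    ∀ t : ℝ, γ ≤ t → x t = 0 := by
  set f : ℝ → ℝ := fun u => (α * u ^ p + β * u ^ q) ^ k
  have hf_pos : ∀ u, 0 < u → 0 < f u := fun u hu => by positivity
  have hf : ContinuousOn f (Ioi 0) := by
    have hrpow : ∀ r : ℝ, ContinuousOn (fun u : ℝ => u ^ r) (Ioi 0) :=
      fun r => continuousOn_id.rpow_const fun u hu => Or.inl (ne_of_gt hu)
    exact ContinuousOn.rpow_const (f := fun u => α * u ^ p + β * u ^ q)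
      (by fun_prop) fun u (hu : 0 < u) => Or.inl (by positivity)
  have hf_inv : ∀ u ∈ Ioi (0:ℝ), (f u)⁻¹ = (α * u ^ p + β * u ^ q) ^ (-k) :=
    fun u (hu : 0 < u) => (rpow_neg (by positivity) k).symm
  have hγ_int : ∫ u in Ioi 0, (f u)⁻¹ = γ := by
    rw [setIntegral_congr_fun measurableSet_Ioi hf_inv, hγ,
      integral_Ioi_add_rpow_rpow_neg hα hβ hk hpq hkp hkq]
  have hγ_pos : 0 < γ := by
    have hqp : 0 < q - p := sub_pos.2 hpq
    have ha : 0 < (1 - k * p) / (q - p) := div_pos (by linarith) hqp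
    have hb : 0 < (k * q - 1) / (q - p) := div_pos (by linarith) hqp
    rw [hγ]
    positivity
  -- a non-integrable function has Bochner integral `0`, and this one integrates to `γ > 0`
  have hf_int : IntegrableOn (fun u => (f u)⁻¹) (Ioi 0) :=
    Integrable.of_integral_ne_zero (hγ_int ▸ hγ_pos.ne')
  exact fun t ht => eq_zero_of_integral_Ioi_inv_le hf hf_pos hf_int hx (hγ_int ▸ ht)

/-- Fixed-time stability of `ẋ = -(α|x|^p + β|x|^q)^k sign(x)`: every solution
vanishes after the time `γ(ρ)`, uniformly in the initial condition. -/
theorem fixed_time_scalar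
    (α β k p q : ℝ) (hα : 0 < α) (hβ : 0 < β) (hk : 0 < k)
    (hp : 0 < p) (hpq : p < q) (hkp : k * p < 1) (hkq : 1 < k * q)
    (γ : ℝ)
    (hγ : γ = Real.Gamma ((1 - k * p) / (q - p)) * Real.Gamma ((k * q - 1) / (q - p)) /
        (α ^ k * Real.Gamma k * (q - p)) * (α / β) ^ ((1 - k * p) / (q - p)))
    (x : ℝ → ℝ)
    (hx : ∀ t : ℝ, 0 ≤ t →
      HasDerivAt x (-(α * |x t| ^ p + β * |x t| ^ q) ^ k * Real.sign (x t)) t) :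
    ∀ t : ℝ, γ ≤ t → x t = 0 :=
  fixed_time_scalar_general α β k p q hα hβ hk hpq hkp hkq γ hγ x hx
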